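/- Every even derivation f of degree (s,t) of the super w∞ 3-algebra with s + 2t ≠ 0 is an inner derivation; explicitly it is a linear combination of ad(L_{1+s}^t, L_{-1}^1), ad(L_1^0, L_{-1+s}^{1+t}), ad(L̄_{1+s}^t, L_{-1}^1), ad(L_1^0, L̄_{-1+s}^{1+t}). -/

import Mathlib

noncomputable section

/-- Basis indices of the super `w∞` 3-algebra: `L_m^i`, `L̄_m^i` (even) and
`h_m^{i+1/2}`, `h̄_m^{i+1/2}` (odd). -/
inductive WIdx : Type
  | L (m : ℤ) (i : ℕ)
  | Lb (m : ℤ) (i : ℕ)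
  | H (m : ℤ) (i : ℕ)
  | Hb (m : ℤ) (i : ℕ)
deriving DecidableEq

/-- The underlying superspace of the super `w∞` 3-algebra: the free `ℂ`-module on `WIdx`. -/
abbrev W : Type := WIdx →₀ ℂ

/-- Basis vectors. -/
def e (a : WIdx) : W := Finsupp.single a 1

/-- Parity of a basis index. -/
def par : WIdx → ZMod 2
  | .L _ _ => 0
  | .Lb _ _ => 0
  | .H _ _ => 1
  | .Hb _ _ => 1

/-- The sign `(-1)^a` of a parity. -/
def sg (a : ZMod 2) : ℂ := (-1 : ℂ) ^ a.val

/-- Structure constant `h(n−m)+j(m−k)+i(k−n)`. -/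
def co (m : ℤ) (i : ℕ) (n : ℤ) (j : ℕ) (k : ℤ) (h : ℕ) : ℂ :=
  (h : ℂ) * ((n : ℂ) - (m : ℂ)) + (j : ℂ) * ((m : ℂ) - (k : ℂ))
    + (i : ℂ) * ((k : ℂ) - (n : ℂ))

/-- Structure constant `i(p−r)+α(r−m)+β(m−p)`. -/
def dd (m : ℤ) (i : ℕ) (p : ℤ) (α : ℕ) (r : ℤ) (β : ℕ) : ℂ :=
  (i : ℂ) * ((p : ℂ) - (r : ℂ)) + (α : ℂ) * ((r : ℂ) - (m : ℂ))
    + (β : ℂ) * ((m : ℂ) - (p : ℂ))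

open WIdx in
/-- The 3-bracket of the super `w∞` 3-algebra on basis indices; unlisted brackets are
obtained by super-skew-symmetry or vanish. -/
def wbr : WIdx → WIdx → WIdx → W
  | L m i, L n j, L k u => co m i n j k u • e (L (m+n+k) (i+j+u-1))
  | L m i, L n j, Lb k u => co m i n j k u • e (Lb (m+n+k) (i+j+u-1))
  | L m i, Lb k u, L n j => co m i k u n j • e (Lb (m+n+k) (i+j+u-1))
  | Lb k u, L m i, L n j => co k u m i n j • e (Lb (m+n+k) (i+j+u-1))
  | L m i, L n j, H p α => co m i n j p α • e (H (m+n+p) (i+j+α-1))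
  | L m i, H p α, L n j => co m i p α n j • e (H (m+n+p) (i+j+α-1))
  | H p α, L m i, L n j => co p α m i n j • e (H (m+n+p) (i+j+α-1))
  | L m i, L n j, Hb p α => co m i n j p α • e (Hb (m+n+p) (i+j+α-1))
  | L m i, Hb p α, L n j => co m i p α n j • e (Hb (m+n+p) (i+j+α-1))
  | Hb p α, L m i, L n j => co p α m i n j • e (Hb (m+n+p) (i+j+α-1))
  | L m i, H p α, Hb r β => dd m i p α r β • e (Lb (m+p+r) (i+α+β-1))
  | L m i, Hb r β, H p α => dd m i p α r β • e (Lb (m+p+r) (i+α+β-1))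
  | H p α, L m i, Hb r β => (- dd m i p α r β) • e (Lb (m+p+r) (i+α+β-1))
  | Hb r β, L m i, H p α => (- dd m i p α r β) • e (Lb (m+p+r) (i+α+β-1))
  | H p α, Hb r β, L m i => dd m i p α r β • e (Lb (m+p+r) (i+α+β-1))
  | Hb r β, H p α, L m i => dd m i p α r β • e (Lb (m+p+r) (i+α+β-1))
  | _, _, _ => 0

/-- The trilinear extension of `wbr` to the whole of `W`. -/
def wbracket (x y z : W) : W :=
  x.sum fun a ca => y.sum fun b cb => z.sum fun c cc => (ca * cb * cc) • wbr a b c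

/-- The `ℤ/2`-grading of `w∞`: the span of the basis vectors of a given parity. -/
def wgr (j : ZMod 2) : Submodule ℂ W :=
  Submodule.span ℂ {w : W | ∃ a : WIdx, par a = j ∧ w = e a}

/-
`ad(L_1^0, L_{-1}^1)` acts diagonally on the basis, multiplying the basis vector of mode `m` and
level `i` by `1 - m - 2i`, and a derivation of degree `(s, t)` lowers this eigenvalue by `s + 2t`.
The derivation identity at `(L_1^0, L_{-1}^1, x)` therefore reads
`(s + 2t) f(x) = [f(L_1^0), L_{-1}^1, x] + [L_1^0, f(L_{-1}^1), x]`, and splitting `f(L_1^0)` and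
`f(L_{-1}^1)` into their `L` and `L̄` components gives the four inner derivations.
-/

open WIdx Finsupp

namespace WIdx

def weight : WIdx → ℂ
  | L m i | Lb m i | H m i | Hb m i => 1 - m - 2 * i

end WIdx

theorem wbr_L_one_zero_L_neg_one_one (x : WIdx) :
    wbr (L 1 0) (L (-1) 1) x = x.weight • e x := by
  cases x <;> simp [wbr, co, WIdx.weight] <;> ring_nf

theorem wbracket_eq_linearCombination (x y z : W) :
    wbracket x y z = linearCombination ℂ
      (fun a => linearCombination ℂ (fun b => linearCombination ℂ (wbr a b) z) y) x := by
  simp only [wbracket, linearCombination_apply, Finsupp.smul_sum, mul_smul]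

theorem linearCombination_e (v : WIdx → W) (a : WIdx) : linearCombination ℂ v (e a) = v a := by
  rw [e, linearCombination_single, one_smul]

theorem wbracket_e_e (a b : WIdx) (z : W) :
    wbracket (e a) (e b) z = linearCombination ℂ (wbr a b) z := by
  simp only [wbracket_eq_linearCombination, linearCombination_e]

theorem wbracket_smul_add_smul_left (α β : ℂ) (y z b c : WIdx) :
    wbracket (α • e y + β • e z) (e b) (e c) = α • wbr y b c + β • wbr z b c := by
  simp only [wbracket_eq_linearCombination, map_add, map_smul, linearCombination_e]

theorem wbracket_smul_add_smul_middle (α β : ℂ) (a y z c : WIdx) :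
    wbracket (e a) (α • e y + β • e z) (e c) = α • wbr a y c + β • wbr a z c := by
  simp only [wbracket_eq_linearCombination, map_add, map_smul, linearCombination_e]

theorem wbracket_L_one_zero_L_neg_one_one_of_weight_eq {f : W →ₗ[ℂ] W} {μ : ℂ} {x y z : WIdx}
    (hf : ∃ α β : ℂ, f (e x) = α • e y + β • e z) (hy : y.weight = μ) (hz : z.weight = μ) :
    wbracket (e (L 1 0)) (e (L (-1) 1)) (f (e x)) = μ • f (e x) := by
  obtain ⟨α, β, hf⟩ := hf
  simp only [hf, wbracket_e_e, map_add, map_smul, linearCombination_e,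
    wbr_L_one_zero_L_neg_one_one, hy, hz, smul_add, smul_comm μ]

theorem smul_apply_e_eq_of_derivation {f : W →ₗ[ℂ] W} {a b x : WIdx} {μ c : ℂ}
    (hab : wbr a b x = μ • e x)
    (hder : f (wbr a b x) = wbracket (f (e a)) (e b) (e x)
        + wbracket (e a) (f (e b)) (e x) + wbracket (e a) (e b) (f (e x)))
    (hfx : wbracket (e a) (e b) (f (e x)) = (μ - c) • f (e x)) :
    c • f (e x) = wbracket (f (e a)) (e b) (e x) + wbracket (e a) (f (e b)) (e x) := by
  rw [hab, map_smul, hfx] at hder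
  linear_combination (norm := module) hder

theorem apply_eq_of_apply_e_eq {f : W →ₗ[ℂ] W} {a₁ b₁ a₂ b₂ a₃ b₃ a₄ b₄ : WIdx}
    {c₁ c₂ c₃ c₄ : ℂ}
    (h : ∀ x, f (e x) = c₁ • wbr a₁ b₁ x + c₂ • wbr a₂ b₂ x + c₃ • wbr a₃ b₃ x
      + c₄ • wbr a₄ b₄ x) (w : W) :
    f w = c₁ • wbracket (e a₁) (e b₁) w + c₂ • wbracket (e a₂) (e b₂) w
      + c₃ • wbracket (e a₃) (e b₃) w + c₄ • wbracket (e a₄) (e b₄) w := by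
  simp only [wbracket_e_e]
  refine LinearMap.congr_fun (g := c₁ • linearCombination ℂ (wbr a₁ b₁)
    + c₂ • linearCombination ℂ (wbr a₂ b₂) + c₃ • linearCombination ℂ (wbr a₃ b₃)
    + c₄ • linearCombination ℂ (wbr a₄ b₄)) (Finsupp.basisSingleOne.ext fun x => ?_) w
  simpa [e] using h x

/-- every even derivation `f` of degree `(s,t)` of the super `w∞` 3-algebra
with `s + 2t ≠ 0` is inner: it is a linear combination of `ad(L_{1+s}^t, L_{-1}^1)`,
`ad(L_1^0, L_{-1+s}^{1+t})`, `ad(L̄_{1+s}^t, L_{-1}^1)` and `ad(L_1^0, L̄_{-1+s}^{1+t})`. -/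
theorem even_derivation_inner (s : ℤ) (t : ℕ) (hst : s + 2 * (t : ℤ) ≠ 0)
    (f : W →ₗ[ℂ] W)
    -- `f` is even of degree `(s,t)`
    (hdegL : ∀ (m : ℤ) (i : ℕ), ∃ α β : ℂ,
      f (e (.L m i)) = α • e (.L (m+s) (i+t)) + β • e (.Lb (m+s) (i+t)))
    (hdegLb : ∀ (m : ℤ) (i : ℕ), ∃ α β : ℂ,
      f (e (.Lb m i)) = α • e (.L (m+s) (i+t)) + β • e (.Lb (m+s) (i+t)))
    (hdegH : ∀ (m : ℤ) (i : ℕ), ∃ α β : ℂ,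
      f (e (.H m i)) = α • e (.H (m+s) (i+t)) + β • e (.Hb (m+s) (i+t)))
    (hdegHb : ∀ (m : ℤ) (i : ℕ), ∃ α β : ℂ,
      f (e (.Hb m i)) = α • e (.H (m+s) (i+t)) + β • e (.Hb (m+s) (i+t)))
    -- `f` is an (even) derivation
    (hder : ∀ a b c : WIdx,
      f (wbr a b c) = wbracket (f (e a)) (e b) (e c)
        + wbracket (e a) (f (e b)) (e c) + wbracket (e a) (e b) (f (e c))) :
    ∃ c₁ c₂ c₃ c₄ : ℂ, ∀ w : W,
      f w = c₁ • wbracket (e (.L (1+s) t)) (e (.L (-1) 1)) w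
        + c₂ • wbracket (e (.L 1 0)) (e (.L (-1+s) (1+t))) w
        + c₃ • wbracket (e (.Lb (1+s) t)) (e (.L (-1) 1)) w
        + c₄ • wbracket (e (.L 1 0)) (e (.Lb (-1+s) (1+t))) w := by
  have hc : (s + 2 * t : ℂ) ≠ 0 := by exact_mod_cast hst
  have hweight : ∀ x : WIdx, wbracket (e (L 1 0)) (e (L (-1) 1)) (f (e x))
      = (x.weight - (s + 2 * t)) • f (e x) := by
    have hshift (m : ℤ) (i : ℕ) :
        1 - ((m + s : ℤ) : ℂ) - 2 * ((i + t : ℕ) : ℂ) = 1 - m - 2 * i - (s + 2 * t) := by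
      push_cast; ring
    rintro (⟨m, i⟩ | ⟨m, i⟩ | ⟨m, i⟩ | ⟨m, i⟩)
    exacts [wbracket_L_one_zero_L_neg_one_one_of_weight_eq (hdegL m i) (hshift m i) (hshift m i),
      wbracket_L_one_zero_L_neg_one_one_of_weight_eq (hdegLb m i) (hshift m i) (hshift m i),
      wbracket_L_one_zero_L_neg_one_one_of_weight_eq (hdegH m i) (hshift m i) (hshift m i),
      wbracket_L_one_zero_L_neg_one_one_of_weight_eq (hdegHb m i) (hshift m i) (hshift m i)]
  obtain ⟨α, β, ha⟩ := hdegL 1 0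
  obtain ⟨γ, δ, hb⟩ := hdegL (-1) 1
  rw [zero_add] at ha
  refine ⟨α / (s + 2 * t), γ / (s + 2 * t), β / (s + 2 * t), δ / (s + 2 * t),
    apply_eq_of_apply_e_eq fun x => ?_⟩
  have hscaled := smul_apply_e_eq_of_derivation (wbr_L_one_zero_L_neg_one_one x) (hder _ _ x)
    (hweight x)
  rw [ha, hb, wbracket_smul_add_smul_left, wbracket_smul_add_smul_middle] at hscaled
  rw [← inv_smul_smul₀ hc (f (e x)), hscaled]
  module
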